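/- Let G be a group with a chain of subgroups G = G₀ ⊇ G₁ ⊇ ... ⊇ Gₙ = H where each G_i is normal in G_{i-1}. Let ρ be an irreducible representation of H over a field K such that the natural map End_H(ρ) → End_G(ind_H^G(ρ)) is an isomorphism. Then ind_H^G(ρ) is irreducible. -/
import Mathlib


section IndCore

variable {K : Type} [Field K] {G : Type} [Group G] {V : Type} [AddCommGroup V] [Module K V]

/-- The space of the finitely induced representation `ind_H^G ρ`:
functions `f : G → V` with `f (h * g) = ρ h (f g)` supported on finitely many
right cosets `H * t`. -/
def Ind (H : Subgroup G) (ρ : Representation K H V) : Submodule K (G → V) where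
  carrier := {f | (∀ (h : H) (g : G), f (↑h * g) = ρ h (f g)) ∧
    ∃ T : Finset G, ∀ g, f g ≠ 0 → ∃ t ∈ T, ∃ h ∈ H, g = h * t}
  zero_mem' := ⟨fun h g => by simp, ⟨∅, fun g hg => absurd rfl hg⟩⟩
  add_mem' := by
    classical
    rintro f₁ f₂ ⟨h₁, T₁, hT₁⟩ ⟨h₂, T₂, hT₂⟩
    refine ⟨fun h g => by simp [h₁ h g, h₂ h g], ⟨T₁ ∪ T₂, fun g hg => ?_⟩⟩
    by_cases hf : f₁ g ≠ 0
    · obtain ⟨t, ht, h, hh, rfl⟩ := hT₁ g hf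
      exact ⟨t, Finset.mem_union_left _ ht, h, hh, rfl⟩
    · push_neg at hf
      have : f₂ g ≠ 0 := by
        intro h2; exact hg (by simp [Pi.add_apply, hf, h2])
      obtain ⟨t, ht, h, hh, rfl⟩ := hT₂ g this
      exact ⟨t, Finset.mem_union_right _ ht, h, hh, rfl⟩
  smul_mem' := by
    rintro c f ⟨h₁, T, hT⟩
    refine ⟨fun h g => by simp [h₁ h g], ⟨T, fun g hg => ?_⟩⟩
    have : f g ≠ 0 := fun h0 => hg (by simp [h0])
    exact hT g this

/-- The action of `G` on `Ind H ρ` by right translations. -/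
def indRep (H : Subgroup G) (ρ : Representation K H V) : Representation K G (Ind H ρ) where
  toFun x :=
    { toFun := fun f => ⟨fun g => f.1 (g * x),
        ⟨fun h g => by
          show f.1 (↑h * g * x) = ρ h (f.1 (g * x))
          rw [mul_assoc]; exact f.2.1 h (g * x),
         by
          classical
          obtain ⟨T, hT⟩ := f.2.2
          refine ⟨T.image (· * x⁻¹), fun g hg => ?_⟩
          obtain ⟨t, ht, h, hh, hgt⟩ := hT (g * x) hg
          exact ⟨t * x⁻¹, Finset.mem_image_of_mem _ ht, h, hh, by
            rw [← mul_assoc, ← hgt, mul_assoc, mul_inv_cancel, mul_one]⟩⟩⟩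
      map_add' := fun f₁ f₂ => by ext g; rfl
      map_smul' := fun c f => by ext g; rfl }
  map_one' := by ext f g; simp
  map_mul' := fun x y => by ext f g; simp [mul_assoc]

/-- The natural map `End_H(ρ) → End_G(ind_H^G ρ)`, sending an `H`-equivariant
endomorphism `φ` of `V` to post-composition with `φ`. -/
def endInd (H : Subgroup G) (ρ : Representation K H V) (φ : V →ₗ[K] V)
    (hφ : ∀ (h : H) (v : V), φ (ρ h v) = ρ h (φ v)) : Ind H ρ →ₗ[K] Ind H ρ where
  toFun f := ⟨fun g => φ (f.1 g),
    ⟨fun h g => by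
      show φ (f.1 (↑h * g)) = ρ h (φ (f.1 g))
      rw [f.2.1 h g, hφ],
     by
      obtain ⟨T, hT⟩ := f.2.2
      refine ⟨T, fun g hg => hT g (fun h0 => hg ?_)⟩
      show φ (f.1 g) = 0
      rw [h0, map_zero]⟩⟩
  map_add' := fun f₁ f₂ => by ext g; simp
  map_smul' := fun c f => by ext g; simp

/-- Irreducibility of a representation: the space is non-zero and the only
invariant subspaces are `0` and the whole space. -/
def IsIrredRep {W : Type} [AddCommGroup W] [Module K W] (π : Representation K G W) : Prop :=
  (∃ w : W, w ≠ 0) ∧ ∀ p : Submodule K W, (∀ g : G, ∀ w ∈ p, π g w ∈ p) → p = ⊥ ∨ p = ⊤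

/-- The one-dimensional representation attached to a character `χ : H → K*`. -/
def charRep {H : Type} [Group H] (χ : H →* Kˣ) : Representation K H K where
  toFun h := (χ h : K) • LinearMap.id
  map_one' := by refine LinearMap.ext fun v => ?_; simp
  map_mul' := fun a b => by
    refine LinearMap.ext fun v => ?_
    simp [mul_smul, mul_left_comm]

end IndCore

/-- The natural map `End_H(ρ) → End_G(ind_H^G ρ)` lands in `G`-equivariant
endomorphisms. -/
theorem endInd_comm {K : Type} [Field K] {G : Type} [Group G] {V : Type} [AddCommGroup V]
    [Module K V] (H : Subgroup G) (ρ : Representation K H V) (φ : V →ₗ[K] V)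
    (hφ : ∀ (h : H) (v : V), φ (ρ h v) = ρ h (φ v)) (x : G) (f : Ind H ρ) :
    endInd H ρ φ hφ (indRep H ρ x f) = indRep H ρ x (endInd H ρ φ hφ f) := rfl

open scoped Classical

section AuxBasic

variable {K : Type} [Field K] {G : Type} [Group G] {V : Type} [AddCommGroup V] [Module K V]

theorem indRep_apply (H : Subgroup G) (ρ : Representation K H V) (x : G) (f : Ind H ρ) (g : G) :
    (indRep H ρ x f : G → V) g = (f : G → V) (g * x) := rfl

theorem endInd_apply (H : Subgroup G) (ρ : Representation K H V) (φ : V →ₗ[K] V)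
    (hφ : ∀ (h : H) (v : V), φ (ρ h v) = ρ h (φ v)) (f : Ind H ρ) (g : G) :
    (endInd H ρ φ hφ f : G → V) g = φ ((f : G → V) g) := rfl

/-- Evaluation at a point, as a linear map. -/
def evAt (H : Subgroup G) (ρ : Representation K H V) (g₀ : G) : Ind H ρ →ₗ[K] V where
  toFun f := (f : G → V) g₀
  map_add' := fun _ _ => rfl
  map_smul' := fun _ _ => rfl

/-- Extension by zero, as a linear map `V →ₗ[K] Ind H ρ`. -/
noncomputable def ext0 (H : Subgroup G) (ρ : Representation K H V) : V →ₗ[K] Ind H ρ where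
  toFun v := ⟨fun g => if hg : g ∈ H then ρ ⟨g, hg⟩ v else 0, by
    constructor
    · intro h g
      show (if hg : (↑h * g : G) ∈ H then ρ ⟨↑h * g, hg⟩ v else 0) =
        ρ h (if hg : g ∈ H then ρ ⟨g, hg⟩ v else 0)
      by_cases hg : g ∈ H
      · have hh : (↑h * g : G) ∈ H := mul_mem h.2 hg
        rw [dif_pos hg, dif_pos hh]
        have : (⟨↑h * g, hh⟩ : H) = h * ⟨g, hg⟩ := rfl
        rw [this, map_mul]; rfl
      · have hh : (↑h * g : G) ∉ H := by
          intro hmem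
          exact hg (by simpa using mul_mem (inv_mem h.2) hmem)
        rw [dif_neg hg, dif_neg hh, map_zero]
    · refine ⟨{1}, fun g hg => ⟨1, Finset.mem_singleton_self 1, g, ?_, (mul_one g).symm⟩⟩
      by_contra hgH
      exact hg (dif_neg hgH)⟩
  map_add' := fun v w => by
    apply Subtype.ext; funext g
    show (if hg : g ∈ H then ρ ⟨g, hg⟩ (v + w) else 0) =
      (if hg : g ∈ H then ρ ⟨g, hg⟩ v else 0) + (if hg : g ∈ H then ρ ⟨g, hg⟩ w else 0)
    by_cases hg : g ∈ H
    · simp only [dif_pos hg, map_add]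
    · simp only [dif_neg hg, add_zero]
  map_smul' := fun c v => by
    apply Subtype.ext; funext g
    show (if hg : g ∈ H then ρ ⟨g, hg⟩ (c • v) else 0) =
      c • (if hg : g ∈ H then ρ ⟨g, hg⟩ v else 0)
    by_cases hg : g ∈ H
    · simp only [dif_pos hg, map_smul]
    · simp only [dif_neg hg, smul_zero]

theorem ext0_apply (H : Subgroup G) (ρ : Representation K H V) (v : V) (g : G) :
    (ext0 H ρ v : G → V) g = if hg : g ∈ H then ρ ⟨g, hg⟩ v else 0 := rfl

theorem ext0_apply_one (H : Subgroup G) (ρ : Representation K H V) (v : V) :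
    (ext0 H ρ v : G → V) 1 = v := by
  rw [ext0_apply, dif_pos (one_mem H)]
  have : (⟨(1:G), one_mem H⟩ : H) = 1 := rfl
  rw [this, map_one]; rfl

/-- Functions whose support is covered by the right cosets of elements of `T`. -/
def suppCover (H : Subgroup G) (T : Finset G) : Submodule K (G → V) where
  carrier := {f | ∀ g, f g ≠ 0 → ∃ t ∈ T, ∃ h ∈ H, g = h * t}
  zero_mem' := fun g hg => absurd rfl hg
  add_mem' := by
    intro f₁ f₂ h₁ h₂ g hg
    by_cases hf : f₁ g ≠ 0
    · exact h₁ g hf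
    · push_neg at hf
      refine h₂ g fun h0 => hg ?_
      show f₁ g + f₂ g = 0
      rw [hf, h0, add_zero]
  smul_mem' := by
    intro c f hf g hg
    exact hf g (fun h0 => hg (by show c • f g = 0; rw [h0, smul_zero]))

theorem mem_suppCover {H : Subgroup G} {T : Finset G} {f : G → V} :
    f ∈ (suppCover H T : Submodule K (G → V)) ↔
      ∀ g, f g ≠ 0 → ∃ t ∈ T, ∃ h ∈ H, g = h * t := Iff.rfl

/-- Transfer of irreducibility along an equivariant linear equivalence. -/
theorem irred_of_equiv {A B : Type} [AddCommGroup A] [Module K A] [AddCommGroup B] [Module K B]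
    (πA : Representation K G A) (πB : Representation K G B) (e : A ≃ₗ[K] B)
    (he : ∀ (g : G) (a : A), e (πA g a) = πB g (e a)) (h : IsIrredRep πA) :
    IsIrredRep πB := by
  obtain ⟨⟨a, ha⟩, hinv⟩ := h
  constructor
  · exact ⟨e a, fun h0 => ha (by simpa using e.map_eq_zero_iff.mp h0)⟩
  · intro p hp
    have hcom : ∀ g : G, ∀ w ∈ p.comap (e : A →ₗ[K] B), πA g w ∈ p.comap (e : A →ₗ[K] B) := by
      intro g w hw
      simp only [Submodule.mem_comap, LinearEquiv.coe_coe] at hw ⊢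
      rw [he]
      exact hp g _ hw
    have hmap : p = Submodule.map (e : A →ₗ[K] B) (p.comap (e : A →ₗ[K] B)) :=
      (Submodule.map_comap_eq_of_surjective e.surjective p).symm
    rcases hinv _ hcom with h0 | h1
    · left; rw [hmap, h0, Submodule.map_bot]
    · right; rw [hmap, h1, Submodule.map_top, LinearEquiv.range]

end AuxBasic

section NormalCase

variable {K : Type} [Field K] {G : Type} [Group G] {V : Type} [AddCommGroup V] [Module K V]

theorem normalCase (H : Subgroup G) (hH : ∀ g : G, ∀ h ∈ H, g * h * g⁻¹ ∈ H)
    (ρ : Representation K H V) (hirr : IsIrredRep ρ)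
    (hsurj : ∀ Φ : Ind H ρ →ₗ[K] Ind H ρ,
      (∀ (x : G) (f : Ind H ρ), Φ (indRep H ρ x f) = indRep H ρ x (Φ f)) →
      ∃ φ : V →ₗ[K] V, ∃ hφ : ∀ (h : H) (v : V), φ (ρ h v) = ρ h (φ v),
        endInd H ρ φ hφ = Φ) :
    IsIrredRep (indRep H ρ) := by
  obtain ⟨⟨v₀, hv₀⟩, hinv⟩ := hirr
  constructor
  · refine ⟨ext0 H ρ v₀, fun h0 => hv₀ ?_⟩
    have := congrFun (congrArg Subtype.val h0) 1
    rwa [ext0_apply_one] at this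
  · intro W hW
    by_cases hWbot : W = ⊥
    · left; exact hWbot
    right
    obtain ⟨f₀, hf₀W, hf₀⟩ := (Submodule.ne_bot_iff W).mp hWbot
    have hex : ∃ k : ℕ, ∃ f : Ind H ρ, f ∈ W ∧ f ≠ 0 ∧
        ∃ T : Finset G, T.card ≤ k ∧ (f : G → V) ∈ (suppCover H T : Submodule K (G → V)) := by
      obtain ⟨T, hT⟩ := f₀.2.2
      exact ⟨T.card, f₀, hf₀W, hf₀, T, le_rfl, hT⟩
    set k₀ := Nat.find hex with hk₀def
    obtain ⟨f, hfW, hf, T, hTcard, hTcov⟩ := Nat.find_spec hex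
    rw [← hk₀def] at hTcard
    have hk₀pos : 0 < k₀ := by
      rcases Nat.eq_zero_or_pos k₀ with h0 | h1
      · exfalso
        rw [h0] at hTcard
        have hTe : T = ∅ := Finset.card_eq_zero.mp (Nat.le_zero.mp hTcard)
        apply hf
        apply Subtype.ext; funext g
        by_contra hg
        obtain ⟨t, ht, _⟩ := hTcov g hg
        rw [hTe] at ht
        exact absurd ht (Finset.notMem_empty t)
      · exact h1
    have hmin : ¬ ∃ f : Ind H ρ, f ∈ W ∧ f ≠ 0 ∧
        ∃ T : Finset G, T.card ≤ k₀ - 1 ∧ (f : G → V) ∈ (suppCover H T : Submodule K (G → V)) :=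
      Nat.find_min hex (by omega)
    -- translate so that the value at 1 is nonzero
    obtain ⟨g₁, hg₁⟩ : ∃ g₁ : G, (f : G → V) g₁ ≠ 0 := by
      by_contra hng
      push_neg at hng
      exact hf (Subtype.ext (funext hng))
    set f' := indRep H ρ g₁ f with hf'def
    have hf'W : f' ∈ W := hW g₁ f hfW
    have hf'1 : (f' : G → V) 1 ≠ 0 := by
      rw [indRep_apply, one_mul]; exact hg₁
    have hf'cov : (f' : G → V) ∈
        (suppCover H (T.image (· * g₁⁻¹)) : Submodule K (G → V)) := by
      intro g hg
      rw [indRep_apply] at hg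
      obtain ⟨t, ht, h, hh, hgt⟩ := hTcov (g * g₁) hg
      exact ⟨t * g₁⁻¹, Finset.mem_image_of_mem _ ht, h, hh, by
        rw [← mul_assoc, ← hgt, mul_assoc, mul_inv_cancel, mul_one]⟩
    -- normalize the covering set to contain 1
    obtain ⟨t₀, ht₀T, h₀, hh₀, h1eq⟩ := hf'cov 1 hf'1
    have ht₀H : t₀ ∈ H := by
      have ht₀ : t₀ = h₀⁻¹ := eq_inv_of_mul_eq_one_right h1eq.symm
      rw [ht₀]; exact inv_mem hh₀
    set T₃ := (T.image (· * g₁⁻¹)).erase t₀ with hT₃def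
    have hT₃card : T₃.card ≤ k₀ - 1 := by
      rw [hT₃def, Finset.card_erase_of_mem ht₀T]
      have := (Finset.card_image_le (s := T) (f := (· * g₁⁻¹))).trans hTcard
      omega
    have hcov : (f' : G → V) ∈ (suppCover H (insert 1 T₃) : Submodule K (G → V)) := by
      intro g hg
      obtain ⟨t, ht, h₂, hh₂, hgeq⟩ := hf'cov g hg
      by_cases hte : t = t₀
      · exact ⟨1, Finset.mem_insert_self _ _, h₂ * t₀, mul_mem hh₂ ht₀H, by
          rw [mul_one, hgeq, hte]⟩
      · exact ⟨t, Finset.mem_insert_of_mem (Finset.mem_erase.mpr ⟨hte, ht⟩), h₂, hh₂, hgeq⟩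
    clear hf'cov hTcov hTcard h1eq ht₀T
    by_cases hsingle : ∀ g : G, (f' : G → V) g ≠ 0 → g ∈ H
    · -- Case A : f' is supported on H; then W contains all of ext0, and W = ⊤
      have hfe : f' = ext0 H ρ ((f' : G → V) 1) := by
        apply Subtype.ext; funext g
        rw [ext0_apply]
        by_cases hg : g ∈ H
        · rw [dif_pos hg]
          have := f'.2.1 ⟨g, hg⟩ 1
          rw [mul_one] at this
          exact this
        · rw [dif_neg hg]
          by_contra h0
          exact hg (hsingle g h0)
      have hU : ∀ v : V, ext0 H ρ v ∈ W := by
        have hUinv : ∀ (h : H), ∀ v ∈ W.comap (ext0 H ρ), ρ h v ∈ W.comap (ext0 H ρ) := by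
          intro h v hv
          rw [Submodule.mem_comap] at hv ⊢
          have hcomm : ext0 H ρ (ρ h v) = indRep H ρ ↑h (ext0 H ρ v) := by
            apply Subtype.ext; funext g
            rw [indRep_apply, ext0_apply, ext0_apply]
            by_cases hg : g ∈ H
            · have hgh : g * ↑h ∈ H := mul_mem hg h.2
              rw [dif_pos hg, dif_pos hgh]
              have : (⟨g * ↑h, hgh⟩ : H) = ⟨g, hg⟩ * h := rfl
              rw [this, map_mul]
              rfl
            · have hgh : g * ↑h ∉ H := fun hmem =>
                hg (by simpa using mul_mem hmem (inv_mem h.2))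
              rw [dif_neg hg, dif_neg hgh]
          rw [hcomm]
          exact hW ↑h _ hv
        rcases hinv _ hUinv with h0 | h1
        · exfalso
          have hmem : (f' : G → V) 1 ∈ W.comap (ext0 H ρ) := by
            rw [Submodule.mem_comap, ← hfe]; exact hf'W
          rw [h0] at hmem
          exact hf'1 (by simpa using hmem)
        · intro v
          have : v ∈ W.comap (ext0 H ρ) := h1 ▸ Submodule.mem_top
          exact Submodule.mem_comap.mp this
      have claim : ∀ (k : ℕ) (T' : Finset G) (fa : Ind H ρ), T'.card ≤ k →
          (fa : G → V) ∈ (suppCover H T' : Submodule K (G → V)) → fa ∈ W := by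
        intro k
        induction k with
        | zero =>
          intro T' fa hc hcov'
          have hT' : T' = ∅ := Finset.card_eq_zero.mp (Nat.le_zero.mp hc)
          have : fa = 0 := by
            apply Subtype.ext; funext g
            by_contra h0
            obtain ⟨t, ht, _⟩ := hcov' g h0
            rw [hT'] at ht
            exact absurd ht (Finset.notMem_empty t)
          rw [this]; exact W.zero_mem
        | succ k ih =>
          intro T' fa hc hcov'
          rcases Finset.eq_empty_or_nonempty T' with he | ⟨t, htT⟩
          · exact ih T' fa (by simp [he]) hcov'
          · set cc := indRep H ρ t⁻¹ (ext0 H ρ ((fa : G → V) t)) with hcc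
            have hccW : cc ∈ W := hW t⁻¹ _ (hU _)
            have hccval : ∀ g : G, (cc : G → V) g =
                if hg : g * t⁻¹ ∈ H then ρ ⟨g * t⁻¹, hg⟩ ((fa : G → V) t) else 0 := fun g => rfl
            have hrest : ((fa - cc : Ind H ρ) : G → V) ∈
                (suppCover H (T'.erase t) : Submodule K (G → V)) := by
              intro g hg
              have hfc : (fa : G → V) g - (cc : G → V) g ≠ 0 := hg
              by_cases hgt : g * t⁻¹ ∈ H
              · exfalso
                have hva : (fa : G → V) g = ρ ⟨g * t⁻¹, hgt⟩ ((fa : G → V) t) := by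
                  have := fa.2.1 ⟨g * t⁻¹, hgt⟩ t
                  rwa [inv_mul_cancel_right] at this
                apply hfc
                rw [hva, hccval, dif_pos hgt, sub_self]
              · have hfag : (fa : G → V) g ≠ 0 := by
                  intro h0
                  apply hfc
                  rw [h0, hccval, dif_neg hgt, sub_zero]
                obtain ⟨t', ht', h₂, hh₂, hgeq⟩ := hcov' g hfag
                refine ⟨t', Finset.mem_erase.mpr ⟨?_, ht'⟩, h₂, hh₂, hgeq⟩
                rintro rfl
                exact hgt (by rw [hgeq, mul_inv_cancel_right]; exact hh₂)
            have hsub : (fa - cc) ∈ W :=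
              ih (T'.erase t) (fa - cc) (by rw [Finset.card_erase_of_mem htT]; omega) hrest
            have := W.add_mem hsub hccW
            simpa using this
      apply eq_top_iff.mpr
      intro fa _
      obtain ⟨Ta, hTa⟩ := fa.2.2
      exact claim Ta.card Ta fa le_rfl hTa
    · -- Case B : f' has support outside H; derive a contradiction
      exfalso
      push_neg at hsingle
      obtain ⟨τ, hτ0, hτH⟩ := hsingle
      set Wb : Submodule K (Ind H ρ) :=
        Submodule.span K {w : Ind H ρ | ∃ h : H, w = indRep H ρ ↑h f'} with hWbdef
      have hfWb : f' ∈ Wb := by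
        apply Submodule.subset_span
        exact ⟨1, by rw [OneMemClass.coe_one, map_one]; rfl⟩
      have hWbW : Wb ≤ W := Submodule.span_le.mpr (by
        rintro w ⟨h, rfl⟩
        exact hW ↑h f' hf'W)
      have hWbT : ∀ w ∈ Wb, (w : G → V) ∈
          (suppCover H (insert 1 T₃) : Submodule K (G → V)) := by
        have hle : Wb ≤ (suppCover H (insert 1 T₃)).comap ((Ind H ρ).subtype) := by
          apply Submodule.span_le.mpr
          rintro w ⟨h, rfl⟩
          intro g hg
          have hg2 : (f' : G → V) (g * ↑h) ≠ 0 := hg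
          obtain ⟨t, ht, h₂, hh₂, hgeq⟩ := hcov (g * ↑h) hg2
          refine ⟨t, ht, h₂ * (t * (↑h)⁻¹ * t⁻¹), mul_mem hh₂ (hH t _ (inv_mem h.2)), ?_⟩
          have hg' : g = h₂ * t * (↑h)⁻¹ := by
            rw [← hgeq, mul_inv_cancel_right]
          rw [hg']; group
        intro w hw
        exact hle hw
      have hWbinv : ∀ (h : H), ∀ w ∈ Wb, indRep H ρ ↑h w ∈ Wb := by
        intro h w hw
        have hle : Submodule.map (indRep H ρ ↑h) Wb ≤ Wb := by
          rw [hWbdef, Submodule.map_span]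
          apply Submodule.span_le.mpr
          rintro w' ⟨w'', ⟨h', rfl⟩, rfl⟩
          apply Submodule.subset_span
          refine ⟨h * h', ?_⟩
          rw [Subgroup.coe_mul, map_mul]
          rfl
        exact hle ⟨w, hw, rfl⟩
      set e : Wb →ₗ[K] V := (evAt H ρ 1).comp Wb.subtype with hedef
      have hkey : ∀ w : Wb, e w = 0 → w = 0 := by
        intro w hw
        have hw1 : ((w.1 : Ind H ρ) : G → V) 1 = 0 := hw
        by_contra hw0
        apply hmin
        refine ⟨w.1, hWbW w.2, fun h0 => hw0 (Subtype.ext h0), T₃, hT₃card, ?_⟩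
        intro g hg
        obtain ⟨t, ht, h₂, hh₂, hgeq⟩ := hWbT w.1 w.2 g hg
        rcases Finset.mem_insert.mp ht with rfl | htT₃
        · exfalso
          apply hg
          rw [hgeq]
          have h5 := w.1.2.1 ⟨h₂, hh₂⟩ 1
          rw [hw1, map_zero] at h5
          exact h5
        · exact ⟨t, htT₃, h₂, hh₂, hgeq⟩
      have heinj : Function.Injective e := by
        intro w₁ w₂ hw12
        have hz : e (w₁ - w₂) = 0 := by
          have h6 : e (w₁ - w₂) = e w₁ - e w₂ := map_sub e w₁ w₂
          rw [h6, hw12, sub_self]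
        exact sub_eq_zero.mp (hkey _ hz)
      have heeq : ∀ (h : H) (w : Wb),
          e ⟨indRep H ρ ↑h w.1, hWbinv h w.1 w.2⟩ = ρ h (e w) := by
        intro h w
        show ((indRep H ρ ↑h w.1 : Ind H ρ) : G → V) 1 = ρ h (((w.1 : Ind H ρ) : G → V) 1)
        rw [indRep_apply, one_mul]
        have := w.1.2.1 h 1
        rwa [mul_one] at this
      have hrinv : ∀ (h : H), ∀ v ∈ LinearMap.range e, ρ h v ∈ LinearMap.range e := by
        rintro h v ⟨w, rfl⟩
        exact ⟨⟨indRep H ρ ↑h w.1, hWbinv h w.1 w.2⟩, heeq h w⟩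
      have hesurj : LinearMap.range e = ⊤ := by
        rcases hinv (LinearMap.range e) hrinv with h0 | h1
        · exfalso
          have hmem : (f' : G → V) 1 ∈ LinearMap.range e := ⟨⟨f', hfWb⟩, rfl⟩
          rw [h0] at hmem
          exact hf'1 (by simpa using hmem)
        · exact h1
      have hes : Function.Surjective e := LinearMap.range_eq_top.mp hesurj
      set ee := LinearEquiv.ofBijective e ⟨heinj, hes⟩ with heedef
      set u : V →ₗ[K] V := (evAt H ρ τ).comp (Wb.subtype.comp ee.symm.toLinearMap) with hudef
      have hu_e : ∀ w : Wb, u (e w) = ((w.1 : Ind H ρ) : G → V) τ := by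
        intro w
        have h1 : ee.symm (e w) = w := by
          have : e w = ee w := rfl
          rw [this, LinearEquiv.symm_apply_apply]
        show (((ee.symm (e w)).1 : Ind H ρ) : G → V) τ = _
        rw [h1]
      have hu0 : u ((f' : G → V) 1) = (f' : G → V) τ := hu_e ⟨f', hfWb⟩
      have hu_eq : ∀ (h : H) (v : V),
          u (ρ h v) = ρ ⟨τ * ↑h * τ⁻¹, hH τ ↑h h.2⟩ (u v) := by
        intro h v
        obtain ⟨w, rfl⟩ := hes v
        rw [← heeq h w, hu_e, hu_e]
        show ((indRep H ρ ↑h w.1 : Ind H ρ) : G → V) τ = _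
        rw [indRep_apply]
        have h3 := w.1.2.1 ⟨τ * ↑h * τ⁻¹, hH τ ↑h h.2⟩ τ
        rw [show ((⟨τ * ↑h * τ⁻¹, hH τ ↑h h.2⟩ : H) : G) * τ = τ * ↑h by group] at h3
        exact h3
      have hτinv : ∀ hh : G, hh ∈ H → τ⁻¹ * hh * τ ∈ H := by
        intro hh hmem
        have := hH τ⁻¹ hh hmem
        rwa [inv_inv] at this
      have hu_eq' : ∀ (hh : G) (hmem : hh ∈ H) (v : V),
          u (ρ ⟨τ⁻¹ * hh * τ, hτinv hh hmem⟩ v) = ρ ⟨hh, hmem⟩ (u v) := by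
        intro hh hmem v
        rw [hu_eq ⟨τ⁻¹ * hh * τ, hτinv hh hmem⟩ v]
        have hsub : (⟨τ * ↑(⟨τ⁻¹ * hh * τ, hτinv hh hmem⟩ : H) * τ⁻¹,
            hH τ _ (hτinv hh hmem)⟩ : H) = ⟨hh, hmem⟩ := by
          apply Subtype.ext
          show τ * (τ⁻¹ * hh * τ) * τ⁻¹ = hh
          group
        rw [hsub]
      have hΦmem : ∀ fa : Ind H ρ,
          (fun g => u ((fa : G → V) (τ⁻¹ * g))) ∈ Ind H ρ := by
        intro fa
        constructor
        · intro h g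
          show u ((fa : G → V) (τ⁻¹ * (↑h * g))) = ρ h (u ((fa : G → V) (τ⁻¹ * g)))
          have h1 : τ⁻¹ * (↑h * g) =
              ↑(⟨τ⁻¹ * ↑h * τ, hτinv ↑h h.2⟩ : H) * (τ⁻¹ * g) := by
            show τ⁻¹ * (↑h * g) = (τ⁻¹ * ↑h * τ) * (τ⁻¹ * g)
            group
          rw [h1, fa.2.1 ⟨τ⁻¹ * ↑h * τ, hτinv ↑h h.2⟩ (τ⁻¹ * g), hu_eq' ↑h h.2]
        · obtain ⟨Ta, hTa⟩ := fa.2.2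
          refine ⟨Ta.image (fun t => τ * t), fun g hg => ?_⟩
          have hfa : (fa : G → V) (τ⁻¹ * g) ≠ 0 := by
            intro h0
            apply hg
            show u ((fa : G → V) (τ⁻¹ * g)) = 0
            rw [h0, map_zero]
          obtain ⟨t, ht, h₂, hh₂, hgeq⟩ := hTa (τ⁻¹ * g) hfa
          refine ⟨τ * t, Finset.mem_image_of_mem _ ht, τ * h₂ * τ⁻¹, hH τ h₂ hh₂, ?_⟩
          rw [show (τ * h₂ * τ⁻¹) * (τ * t) = τ * (h₂ * t) by group, ← hgeq]
          group
      set Φ : Ind H ρ →ₗ[K] Ind H ρ :=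
        { toFun := fun fa => ⟨fun g => u ((fa : G → V) (τ⁻¹ * g)), hΦmem fa⟩
          map_add' := fun fa fb => by
            apply Subtype.ext; funext g
            show u ((fa : G → V) (τ⁻¹ * g) + (fb : G → V) (τ⁻¹ * g)) =
              u ((fa : G → V) (τ⁻¹ * g)) + u ((fb : G → V) (τ⁻¹ * g))
            exact map_add u _ _
          map_smul' := fun c fa => by
            apply Subtype.ext; funext g
            show u (c • (fa : G → V) (τ⁻¹ * g)) = c • u ((fa : G → V) (τ⁻¹ * g))
            exact map_smul u c _ } with hΦdef
      have hΦcomm : ∀ (x : G) (fa : Ind H ρ),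
          Φ (indRep H ρ x fa) = indRep H ρ x (Φ fa) := by
        intro x fa
        apply Subtype.ext; funext g
        show u ((fa : G → V) (τ⁻¹ * g * x)) = u ((fa : G → V) (τ⁻¹ * (g * x)))
        rw [mul_assoc]
      obtain ⟨φ, hφ, hfeq⟩ := hsurj Φ hΦcomm
      have hL : ((endInd H ρ φ hφ (ext0 H ρ ((f' : G → V) 1)) : Ind H ρ) : G → V) τ = 0 := by
        rw [endInd_apply, ext0_apply, dif_neg hτH, map_zero]
      have hR : ((Φ (ext0 H ρ ((f' : G → V) 1)) : Ind H ρ) : G → V) τ = (f' : G → V) τ := by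
        show u ((ext0 H ρ ((f' : G → V) 1) : G → V) (τ⁻¹ * τ)) = _
        rw [inv_mul_cancel, ext0_apply_one, hu0]
      apply hτ0
      rw [← hR, ← hfeq]
      exact hL

end NormalCase

section Trans

variable {K : Type} [Field K] {G : Type} [Group G] {V : Type} [AddCommGroup V] [Module K V]

/-- The inclusion `H.subgroupOf N →* H`. -/
def sgIncl (H N : Subgroup G) : ↥(H.subgroupOf N) →* ↥H where
  toFun h' := ⟨↑↑h', h'.2⟩
  map_one' := rfl
  map_mul' := fun _ _ => rfl

/-- Restriction of `ρ` to `H.subgroupOf N`. -/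
def resRep (H N : Subgroup G) (ρ : Representation K H V) :
    Representation K (H.subgroupOf N) V := ρ.comp (sgIncl H N)

variable (H N : Subgroup G) (hHN : H ≤ N) (ρ : Representation K H V)

/-- The fiber at `g` of the transitivity isomorphism. -/
def transAux (f : Ind H ρ) (g : G) : Ind (H.subgroupOf N) (resRep H N ρ) := by
  classical
  refine ⟨fun x : N => (f : G → V) (↑x * g), ?_, ?_⟩
  · intro h' x
    show (f : G → V) ((↑(↑h' * x) : G) * g) = ρ (sgIncl H N h') ((f : G → V) (↑x * g))
    have h1 : (↑(↑h' * x) : G) * g = ↑(sgIncl H N h') * ((↑x : G) * g) := by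
      show ((↑↑h' : G) * ↑x) * g = (↑↑h' : G) * ((↑x : G) * g)
      rw [mul_assoc]
    rw [h1, f.2.1 (sgIncl H N h') (↑x * g)]
  · obtain ⟨T, hT⟩ := f.2.2
    set pick : G → ↥N := fun t =>
      if h : ∃ x : ↥N, ∃ hh ∈ H, (x : G) = hh * (t * g⁻¹) then h.choose else 1 with hpick
    refine ⟨T.image pick, fun x hx => ?_⟩
    obtain ⟨t, ht, h, hh, heq⟩ := hT (↑x * g) hx
    have h1 : (x : G) = h * (t * g⁻¹) := by
      rw [← mul_assoc, ← heq, mul_assoc, mul_inv_cancel, mul_one]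
    have hex : ∃ x' : ↥N, ∃ hh ∈ H, (x' : G) = hh * (t * g⁻¹) := ⟨x, h, hh, h1⟩
    have hspec : ∃ hh ∈ H, (↑(pick t) : G) = hh * (t * g⁻¹) := by
      rw [hpick]; simp only [dif_pos hex]; exact hex.choose_spec
    obtain ⟨h₀, hh₀, heq₀⟩ := hspec
    refine ⟨pick t, Finset.mem_image_of_mem _ ht, x * (pick t)⁻¹, ?_, by group⟩
    show ((x * (pick t)⁻¹ : ↥N) : G) ∈ H
    have h2 : ((x * (pick t)⁻¹ : ↥N) : G) = h * h₀⁻¹ := by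
      push_cast
      rw [h1, heq₀]
      group
    rw [h2]
    exact mul_mem hh (inv_mem hh₀)

/-- Transitivity of induction, forward direction. -/
def theta : Ind H ρ →ₗ[K]
    Ind N (indRep (H.subgroupOf N) (resRep H N ρ)) where
  toFun f := ⟨fun g => transAux H N ρ f g, by
    constructor
    · intro n g
      apply Subtype.ext; funext x
      show (f : G → V) (↑x * (↑n * g)) = (f : G → V) (↑(x * n) * g)
      rw [Subgroup.coe_mul, mul_assoc]
    · obtain ⟨T, hT⟩ := f.2.2
      refine ⟨T, fun g hg => ?_⟩
      have hx : ∃ x : ↥N, (f : G → V) (↑x * g) ≠ 0 := by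
        by_contra hng
        push_neg at hng
        exact hg (Subtype.ext (funext hng))
      obtain ⟨x, hx0⟩ := hx
      obtain ⟨t, ht, h, hh, heq⟩ := hT (↑x * g) hx0
      refine ⟨t, ht, (↑x : G)⁻¹ * h, mul_mem (inv_mem x.2) (hHN hh), ?_⟩
      rw [mul_assoc, ← heq]
      group⟩
  map_add' := fun f₁ f₂ => by
    apply Subtype.ext; funext g; apply Subtype.ext; funext x; rfl
  map_smul' := fun c f => by
    apply Subtype.ext; funext g; apply Subtype.ext; funext x; rfl

/-- Transitivity of induction, backward direction. -/
def xi : Ind N (indRep (H.subgroupOf N) (resRep H N ρ)) →ₗ[K] Ind H ρ where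
  toFun F := ⟨fun g => ((F.1 g).1 : ↥N → V) 1, by
    constructor
    · intro h g
      show ((F.1 (↑h * g)).1 : ↥N → V) 1 = ρ h (((F.1 g).1 : ↥N → V) 1)
      have h1 := F.2.1 ⟨↑h, hHN h.2⟩ g
      have h2 : ((F.1 (↑h * g)).1 : ↥N → V) 1 =
          ((F.1 g).1 : ↥N → V) ⟨↑h, hHN h.2⟩ := by
        have h2a : F.1 (↑h * g) =
            indRep (H.subgroupOf N) (resRep H N ρ) ⟨↑h, hHN h.2⟩ (F.1 g) := h1
        rw [h2a]
        show ((F.1 g).1 : ↥N → V) (1 * ⟨↑h, hHN h.2⟩) = _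
        rw [one_mul]
      rw [h2]
      have h3 := (F.1 g).2.1 ⟨⟨↑h, hHN h.2⟩, h.2⟩ 1
      rw [mul_one] at h3
      exact h3
    · obtain ⟨T, hT⟩ := F.2.2
      refine ⟨T.biUnion (fun t =>
        Finset.image (fun m : ↥N => (↑m : G) * t) ((F.1 t).2.2.choose)), fun g hg => ?_⟩
      have hFg : F.1 g ≠ 0 := by
        intro h0
        apply hg
        show ((F.1 g).1 : ↥N → V) 1 = 0
        rw [h0]
        rfl
      obtain ⟨t, ht, n, hn, heq⟩ := hT g hFg
      have h4 : F.1 g =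
          indRep (H.subgroupOf N) (resRep H N ρ) ⟨n, hn⟩ (F.1 t) := by
        rw [heq]
        exact F.2.1 ⟨n, hn⟩ t
      have h5 : ((F.1 t).1 : ↥N → V) ⟨n, hn⟩ ≠ 0 := by
        intro h0
        apply hg
        show ((F.1 g).1 : ↥N → V) 1 = 0
        rw [h4]
        show ((F.1 t).1 : ↥N → V) (1 * ⟨n, hn⟩) = 0
        rw [one_mul]
        exact h0
      obtain ⟨m, hm, h', hh', heq'⟩ := (F.1 t).2.2.choose_spec ⟨n, hn⟩ h5
      refine ⟨(↑m : G) * t, Finset.mem_biUnion.mpr ⟨t, ht, Finset.mem_image_of_mem _ hm⟩,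
        ↑↑h', hh', ?_⟩
      have h6 : n = (↑↑h' : G) * ↑m := by
        have := congrArg (Subtype.val : ↥N → G) heq'
        simpa using this
      rw [heq, h6, mul_assoc]⟩
  map_add' := fun F₁ F₂ => by
    apply Subtype.ext; funext g; rfl
  map_smul' := fun c F => by
    apply Subtype.ext; funext g; rfl

theorem xi_theta (f : Ind H ρ) : xi H N hHN ρ (theta H N hHN ρ f) = f := by
  apply Subtype.ext; funext g
  show (f : G → V) (↑(1 : ↥N) * g) = (f : G → V) g
  rw [OneMemClass.coe_one, one_mul]

theorem theta_xi (F : Ind N (indRep (H.subgroupOf N) (resRep H N ρ))) :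
    theta H N hHN ρ (xi H N hHN ρ F) = F := by
  apply Subtype.ext; funext g; apply Subtype.ext; funext x
  show ((F.1 (↑x * g)).1 : ↥N → V) 1 = ((F.1 g).1 : ↥N → V) x
  have h1 : F.1 (↑x * g) =
      indRep (H.subgroupOf N) (resRep H N ρ) x (F.1 g) := F.2.1 x g
  rw [h1]
  show ((F.1 g).1 : ↥N → V) (1 * x) = _
  rw [one_mul]

theorem theta_comm (y : G) (f : Ind H ρ) :
    theta H N hHN ρ (indRep H ρ y f) =
      indRep N (indRep (H.subgroupOf N) (resRep H N ρ)) y (theta H N hHN ρ f) := by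
  apply Subtype.ext; funext g; apply Subtype.ext; funext x
  show (f : G → V) (↑x * g * y) = (f : G → V) (↑x * (g * y))
  rw [mul_assoc]

theorem xi_comm (y : G) (F : Ind N (indRep (H.subgroupOf N) (resRep H N ρ))) :
    xi H N hHN ρ (indRep N (indRep (H.subgroupOf N) (resRep H N ρ)) y F) =
      indRep H ρ y (xi H N hHN ρ F) := rfl

end Trans

section BaseCase

variable {K : Type} [Field K] {G : Type} [Group G] {V : Type} [AddCommGroup V] [Module K V]

/-- The canonical isomorphism `G →* ↥(⊤ : Subgroup G)`. -/
def topHom : G →* ↥(⊤ : Subgroup G) where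
  toFun g := ⟨g, trivial⟩
  map_one' := rfl
  map_mul' := fun _ _ => rfl

theorem topCase (ρ : Representation K (⊤ : Subgroup G) V) (hirr : IsIrredRep ρ) :
    IsIrredRep (indRep ⊤ ρ) := by
  have hmem : ∀ v : V, (fun g => ρ (topHom g) v) ∈ Ind (⊤ : Subgroup G) ρ := by
    intro v
    constructor
    · intro h g
      show ρ (topHom (↑h * g)) v = ρ h (ρ (topHom g) v)
      have h1 : topHom ((↑h : G) * g) = h * topHom g := by
        apply Subtype.ext; rfl
      rw [h1, map_mul]
      rfl
    · exact ⟨{1}, fun g _ => ⟨1, Finset.mem_singleton_self 1, g, trivial, (mul_one g).symm⟩⟩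
  set e : V →ₗ[K] Ind (⊤ : Subgroup G) ρ :=
    { toFun := fun v => ⟨fun g => ρ (topHom g) v, hmem v⟩
      map_add' := fun v w => by
        apply Subtype.ext; funext g
        show ρ (topHom g) (v + w) = ρ (topHom g) v + ρ (topHom g) w
        rw [map_add]
      map_smul' := fun c v => by
        apply Subtype.ext; funext g
        show ρ (topHom g) (c • v) = c • ρ (topHom g) v
        rw [map_smul] } with hedef
  have hbij : Function.Bijective e := by
    constructor
    · intro v w hvw
      have h1 : ρ (topHom (1 : G)) v = ρ (topHom (1 : G)) w :=
        congrFun (congrArg Subtype.val hvw) 1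
      have h2 : ∀ u : V, ρ (topHom (1 : G)) u = u := by
        intro u
        rw [map_one, map_one]
        rfl
      rw [h2 v, h2 w] at h1
      exact h1
    · intro f
      refine ⟨(f : G → V) 1, ?_⟩
      apply Subtype.ext; funext g
      show ρ (topHom g) ((f : G → V) 1) = (f : G → V) g
      have h1 := f.2.1 (topHom g) 1
      rw [mul_one] at h1
      exact h1.symm
  have hirrG : IsIrredRep (ρ.comp topHom) := by
    obtain ⟨hne, hinv⟩ := hirr
    exact ⟨hne, fun p hp => hinv p fun h w hw => hp ↑h w hw⟩
  refine irred_of_equiv (ρ.comp topHom) (indRep ⊤ ρ) (LinearEquiv.ofBijective e hbij)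
    ?_ hirrG
  intro x v
  apply Subtype.ext; funext g
  show ρ (topHom g) (ρ (topHom x) v) = ρ (topHom (g * x)) v
  have h1 : topHom (g * x) = topHom g * topHom x := map_mul topHom g x
  rw [h1, map_mul]
  rfl

end BaseCase

set_option synthInstance.maxHeartbeats 1000000 in
set_option maxHeartbeats 4000000 in
theorem mainInd : ∀ (n : ℕ) {K : Type} [Field K] {G : Type} [Group G] {V : Type}
    [AddCommGroup V] [Module K V] (H : Subgroup G) (c : ℕ → Subgroup G),
    c 0 = ⊤ → c n = H → (∀ i : ℕ, i < n → c (i + 1) ≤ c i) →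
    (∀ i : ℕ, i < n → ∀ g ∈ c i, ∀ h ∈ c (i + 1), g * h * g⁻¹ ∈ c (i + 1)) →
    ∀ (ρ : Representation K H V), IsIrredRep ρ →
    (∀ Φ : Ind H ρ →ₗ[K] Ind H ρ,
      (∀ (x : G) (f : Ind H ρ), Φ (indRep H ρ x f) = indRep H ρ x (Φ f)) →
      ∃ φ : V →ₗ[K] V, ∃ hφ : ∀ (h : H) (v : V), φ (ρ h v) = ρ h (φ v),
        endInd H ρ φ hφ = Φ) →
    IsIrredRep (indRep H ρ) := by
  intro n
  induction n with
  | zero =>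
    intro K iK G iG V iV iM H c hc0 hcn hmono hnorm ρ hirr hsurj
    have hH : H = ⊤ := by rw [← hcn, hc0]
    subst hH
    exact topCase ρ hirr
  | succ m ih =>
    intro K iK G iG V iV iM H c hc0 hcn hmono hnorm ρ hirr hsurj
    have hHN : H ≤ c 1 := by
      have key : ∀ j, j ≤ m → c (j + 1) ≤ c 1 := by
        intro j
        induction j with
        | zero => intro _; exact le_rfl
        | succ k ihk => intro hk; exact (hmono (k + 1) (by omega)).trans (ihk (by omega))
      rw [← hcn]; exact key m le_rfl
    have hNnorm : ∀ g : G, ∀ h ∈ c 1, g * h * g⁻¹ ∈ c 1 := by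
      intro g h hh
      exact hnorm 0 (by omega) g (by rw [hc0]; trivial) h hh
    have hφ'of : ∀ φ : V →ₗ[K] V, (∀ (h : H) (v : V), φ (ρ h v) = ρ h (φ v)) →
        ∀ (h : H.subgroupOf (c 1)) (v : V),
          φ (resRep H (c 1) ρ h v) = resRep H (c 1) ρ h (φ v) :=
      fun φ hφ h v => hφ (sgIncl H (c 1) h) v
    -- irreducibility of the restricted representation
    have hirr' : IsIrredRep (resRep H (c 1) ρ) := by
      obtain ⟨hne, hinv⟩ := hirr
      exact ⟨hne, fun p hp => hinv p fun h w hw => hp ⟨⟨↑h, hHN h.2⟩, h.2⟩ w hw⟩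
    -- a helper : value of ext0 over N at a point of N
    have hFs : ∀ (s : Ind (H.subgroupOf (c 1)) (resRep H (c 1) ρ)) (x : ↥(c 1)),
        (ext0 (c 1) (indRep (H.subgroupOf (c 1)) (resRep H (c 1) ρ)) s : G →
          Ind (H.subgroupOf (c 1)) (resRep H (c 1) ρ)) ↑x =
          indRep (H.subgroupOf (c 1)) (resRep H (c 1) ρ) x s := by
      intro s x
      rw [ext0_apply, dif_pos x.2]
    -- surjectivity of the End map for (c 1, H.subgroupOf (c 1))
    have hsurj' : ∀ Ψ : Ind (H.subgroupOf (c 1)) (resRep H (c 1) ρ) →ₗ[K]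
          Ind (H.subgroupOf (c 1)) (resRep H (c 1) ρ),
        (∀ (x : ↥(c 1)) (s : Ind (H.subgroupOf (c 1)) (resRep H (c 1) ρ)),
          Ψ (indRep (H.subgroupOf (c 1)) (resRep H (c 1) ρ) x s) =
            indRep (H.subgroupOf (c 1)) (resRep H (c 1) ρ) x (Ψ s)) →
        ∃ φ : V →ₗ[K] V, ∃ hφ : ∀ (h : H.subgroupOf (c 1)) (v : V),
            φ (resRep H (c 1) ρ h v) = resRep H (c 1) ρ h (φ v),
          endInd (H.subgroupOf (c 1)) (resRep H (c 1) ρ) φ hφ = Ψ := by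
      intro Ψ hΨ
      have hΨtcomm : ∀ (x : G) (f : Ind H ρ),
          ((xi H (c 1) hHN ρ).comp ((endInd (c 1)
              (indRep (H.subgroupOf (c 1)) (resRep H (c 1) ρ)) Ψ hΨ).comp
            (theta H (c 1) hHN ρ))) (indRep H ρ x f) =
          indRep H ρ x (((xi H (c 1) hHN ρ).comp ((endInd (c 1)
              (indRep (H.subgroupOf (c 1)) (resRep H (c 1) ρ)) Ψ hΨ).comp
            (theta H (c 1) hHN ρ))) f) := by
        intro x f
        show xi H (c 1) hHN ρ (endInd (c 1) _ Ψ hΨ (theta H (c 1) hHN ρ (indRep H ρ x f))) = _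
        rw [theta_comm, endInd_comm, xi_comm]
        rfl
      obtain ⟨φ, hφ, heq⟩ := hsurj _ hΨtcomm
      refine ⟨φ, hφ'of φ hφ, ?_⟩
      apply LinearMap.ext; intro s
      apply Subtype.ext; funext x
      have h2 := congrFun (congrArg Subtype.val (congrArg (fun L => L
        (xi H (c 1) hHN ρ (ext0 (c 1) (indRep (H.subgroupOf (c 1)) (resRep H (c 1) ρ)) s)))
        heq)) ↑x
      have hL : (xi H (c 1) hHN ρ
          (ext0 (c 1) (indRep (H.subgroupOf (c 1)) (resRep H (c 1) ρ)) s) : G → V) ↑x =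
          (s : ↥(c 1) → V) x := by
        show ((ext0 (c 1) (indRep (H.subgroupOf (c 1)) (resRep H (c 1) ρ)) s : G → _) ↑x :
          Ind (H.subgroupOf (c 1)) (resRep H (c 1) ρ)).1 1 = _
        rw [hFs s x]
        show (s : ↥(c 1) → V) (1 * x) = _
        rw [one_mul]
      have hR : (((xi H (c 1) hHN ρ).comp ((endInd (c 1)
              (indRep (H.subgroupOf (c 1)) (resRep H (c 1) ρ)) Ψ hΨ).comp
            (theta H (c 1) hHN ρ)))
          (xi H (c 1) hHN ρ (ext0 (c 1) (indRep (H.subgroupOf (c 1))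
            (resRep H (c 1) ρ)) s)) : G → V) ↑x = (Ψ s : ↥(c 1) → V) x := by
        show (xi H (c 1) hHN ρ (endInd (c 1) _ Ψ hΨ (theta H (c 1) hHN ρ
          (xi H (c 1) hHN ρ (ext0 (c 1) (indRep (H.subgroupOf (c 1))
            (resRep H (c 1) ρ)) s)))) : G → V) ↑x = _
        rw [theta_xi]
        show (Ψ ((ext0 (c 1) (indRep (H.subgroupOf (c 1)) (resRep H (c 1) ρ)) s : G → _) ↑x) :
          ↥(c 1) → V) 1 = _
        rw [hFs s x, hΨ x s]
        show (Ψ s : ↥(c 1) → V) (1 * x) = _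
        rw [one_mul]
      show φ ((s : ↥(c 1) → V) x) = (Ψ s : ↥(c 1) → V) x
      rw [← hL, ← hR]
      exact h2
    -- irreducibility of the intermediate induced representation, by induction hypothesis
    have hσirr : IsIrredRep (indRep (H.subgroupOf (c 1)) (resRep H (c 1) ρ)) := by
      refine ih (H.subgroupOf (c 1)) (fun i => (c (i + 1)).subgroupOf (c 1)) ?_ ?_ ?_ ?_
        (resRep H (c 1) ρ) hirr' hsurj'
      · exact Subgroup.subgroupOf_self (c 1)
      · show (c (m + 1)).subgroupOf (c 1) = H.subgroupOf (c 1)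
        rw [hcn]
      · intro i hi x hx
        rw [Subgroup.mem_subgroupOf] at hx ⊢
        exact hmono (i + 1) (by omega) hx
      · intro i hi g hg h hh
        rw [Subgroup.mem_subgroupOf] at hg hh ⊢
        rw [Subgroup.coe_mul, Subgroup.coe_mul, Subgroup.coe_inv]
        exact hnorm (i + 1) (by omega) ↑g hg ↑h hh
    -- surjectivity of the End map for (G, c 1)
    have hNsurj : ∀ Φ : Ind (c 1) (indRep (H.subgroupOf (c 1)) (resRep H (c 1) ρ)) →ₗ[K]
          Ind (c 1) (indRep (H.subgroupOf (c 1)) (resRep H (c 1) ρ)),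
        (∀ (x : G) (F : Ind (c 1) (indRep (H.subgroupOf (c 1)) (resRep H (c 1) ρ))),
          Φ (indRep (c 1) (indRep (H.subgroupOf (c 1)) (resRep H (c 1) ρ)) x F) =
            indRep (c 1) (indRep (H.subgroupOf (c 1)) (resRep H (c 1) ρ)) x (Φ F)) →
        ∃ ψ, ∃ hψ : ∀ (x : ↥(c 1)) (s : Ind (H.subgroupOf (c 1)) (resRep H (c 1) ρ)),
            ψ (indRep (H.subgroupOf (c 1)) (resRep H (c 1) ρ) x s) =
              indRep (H.subgroupOf (c 1)) (resRep H (c 1) ρ) x (ψ s),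
          endInd (c 1) (indRep (H.subgroupOf (c 1)) (resRep H (c 1) ρ)) ψ hψ = Φ := by
      intro Φ hΦ
      have hΦ'comm : ∀ (x : G) (f : Ind H ρ),
          ((xi H (c 1) hHN ρ).comp (Φ.comp (theta H (c 1) hHN ρ))) (indRep H ρ x f) =
            indRep H ρ x (((xi H (c 1) hHN ρ).comp (Φ.comp (theta H (c 1) hHN ρ))) f) := by
        intro x f
        show xi H (c 1) hHN ρ (Φ (theta H (c 1) hHN ρ (indRep H ρ x f))) = _
        rw [theta_comm, hΦ, xi_comm]
        rfl
      obtain ⟨φ, hφ, heq⟩ := hsurj _ hΦ'comm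
      refine ⟨endInd (H.subgroupOf (c 1)) (resRep H (c 1) ρ) φ (hφ'of φ hφ),
        endInd_comm (H.subgroupOf (c 1)) (resRep H (c 1) ρ) φ (hφ'of φ hφ), ?_⟩
      apply LinearMap.ext; intro F
      apply Subtype.ext; funext g
      apply Subtype.ext; funext x
      have h3 : endInd H ρ φ hφ (xi H (c 1) hHN ρ F) = xi H (c 1) hHN ρ (Φ F) := by
        rw [heq]
        show xi H (c 1) hHN ρ (Φ (theta H (c 1) hHN ρ (xi H (c 1) hHN ρ F))) = _
        rw [theta_xi]
      have h4 := congrFun (congrArg Subtype.val h3) (↑x * g)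
      have hL2 : (xi H (c 1) hHN ρ F : G → V) (↑x * g) =
          ((F : G → Ind (H.subgroupOf (c 1)) (resRep H (c 1) ρ)) g : ↥(c 1) → V) x := by
        show ((F : G → Ind (H.subgroupOf (c 1)) (resRep H (c 1) ρ)) (↑x * g) :
          ↥(c 1) → V) 1 = _
        rw [F.2.1 x g]
        show ((F : G → Ind (H.subgroupOf (c 1)) (resRep H (c 1) ρ)) g : ↥(c 1) → V) (1 * x) = _
        rw [one_mul]
      have hR2 : (xi H (c 1) hHN ρ (Φ F) : G → V) (↑x * g) =
          ((Φ F : G → Ind (H.subgroupOf (c 1)) (resRep H (c 1) ρ)) g : ↥(c 1) → V) x := by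
        show ((Φ F : G → Ind (H.subgroupOf (c 1)) (resRep H (c 1) ρ)) (↑x * g) :
          ↥(c 1) → V) 1 = _
        rw [(Φ F).2.1 x g]
        show ((Φ F : G → Ind (H.subgroupOf (c 1)) (resRep H (c 1) ρ)) g : ↥(c 1) → V) (1 * x) = _
        rw [one_mul]
      show φ (((F : G → Ind (H.subgroupOf (c 1)) (resRep H (c 1) ρ)) g : ↥(c 1) → V) x) =
        ((Φ F : G → Ind (H.subgroupOf (c 1)) (resRep H (c 1) ρ)) g : ↥(c 1) → V) x
      rw [← hL2, ← hR2]
      exact h4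
    -- irreducibility of Ind_{c 1}^G σ by the normal case
    have hindN := normalCase (c 1) hNnorm
      (indRep (H.subgroupOf (c 1)) (resRep H (c 1) ρ)) hσirr hNsurj
    -- transfer along the transitivity isomorphism
    have hcomp1 : (xi H (c 1) hHN ρ).comp (theta H (c 1) hHN ρ) = LinearMap.id := by
      apply LinearMap.ext; intro f
      show xi H (c 1) hHN ρ (theta H (c 1) hHN ρ f) = f
      exact xi_theta H (c 1) hHN ρ f
    have hcomp2 : (theta H (c 1) hHN ρ).comp (xi H (c 1) hHN ρ) = LinearMap.id := by
      apply LinearMap.ext; intro F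
      show theta H (c 1) hHN ρ (xi H (c 1) hHN ρ F) = F
      exact theta_xi H (c 1) hHN ρ F
    refine irred_of_equiv _ (indRep H ρ)
      (LinearEquiv.ofLinear (xi H (c 1) hHN ρ) (theta H (c 1) hHN ρ) hcomp1 hcomp2) ?_ hindN
    intro y F
    exact xi_comm H (c 1) hHN ρ y F


/-- Let `G` be a group with a chain of subgroups
`G = G₀ ⊇ G₁ ⊇ ... ⊇ Gₙ = H`, each `Gᵢ` normal in `Gᵢ₋₁`. Let `ρ` be an
irreducible representation of `H` such that the natural map
`End_H(ρ) → End_G(ind_H^G ρ)` is an isomorphism. Then `ind_H^G ρ` is irreducible. -/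
theorem stmt12 {K : Type} [Field K] {G : Type} [Group G] {V : Type} [AddCommGroup V]
    [Module K V] (H : Subgroup G) (n : ℕ) (c : ℕ → Subgroup G)
    (hc0 : c 0 = ⊤) (hcn : c n = H)
    (hmono : ∀ i : ℕ, i < n → c (i + 1) ≤ c i)
    (hnorm : ∀ i : ℕ, i < n → ∀ g ∈ c i, ∀ h ∈ c (i + 1), g * h * g⁻¹ ∈ c (i + 1))
    (ρ : Representation K H V)
    (hirr : IsIrredRep ρ)
    (hiso : Function.Bijective
      (fun φ : {φ : V →ₗ[K] V // ∀ (h : H) (v : V), φ (ρ h v) = ρ h (φ v)} =>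
        (⟨endInd H ρ φ.1 φ.2, endInd_comm H ρ φ.1 φ.2⟩ :
          {Φ : Ind H ρ →ₗ[K] Ind H ρ // ∀ (x : G) (f : Ind H ρ),
            Φ (indRep H ρ x f) = indRep H ρ x (Φ f)}))) :
    IsIrredRep (indRep H ρ) := by
  apply mainInd n H c hc0 hcn hmono hnorm ρ hirr
  intro Φ hΦ
  obtain ⟨⟨φ, hφ⟩, h⟩ := hiso.2 ⟨Φ, hΦ⟩
  exact ⟨φ, hφ, congrArg Subtype.val h⟩
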